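/- arXiv:2603.13006 — 7 statements merged into one kernel-verified Lean document; each statement's English description precedes it below -/
import Mathlib

section
/- Let Λ be a finite-dimensional algebra, T a torsion class and F a torsion-free class in mod Λ. If T is contravariantly finite and F is contravariantly finite, then the intersection C = T ∩ F is contravariantly finite: explicitly, for any module M, taking a right F-approximation g : F₀ → M and the inclusion h : t_T(F₀) ↪ F₀ of the torsion submodule of F₀ with respect to T, the composite g ∘ h is a right C-approximation of M. -/
/- Common definitions: subcategories of the module category of a
finite-dimensional algebra, torsion theory, approximations,
(support τ-tilting)-style notions, etc. -/

universe u

variable (R : Type u) [Ring R]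

/-- Closed under quotients (epimorphic images). -/
def QuotClosed (C : Set (ModuleCat.{u} R)) : Prop :=
  ∀ (X Y : ModuleCat.{u} R) (f : X →ₗ[R] Y), Function.Surjective f → X ∈ C → Y ∈ C

/-- Closed under submodules. -/
def SubClosed (C : Set (ModuleCat.{u} R)) : Prop :=
  ∀ (X Y : ModuleCat.{u} R) (f : X →ₗ[R] Y), Function.Injective f → Y ∈ C → X ∈ C

/-- Closed under extensions: for a short exact sequence 0 → A → B → X → 0
with A, X ∈ C, also B ∈ C. -/
def ExtClosed (C : Set (ModuleCat.{u} R)) : Prop :=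
  ∀ (A B X : ModuleCat.{u} R) (f : A →ₗ[R] B) (g : B →ₗ[R] X),
    Function.Injective f → Function.Surjective g →
    LinearMap.range f = LinearMap.ker g → A ∈ C → X ∈ C → B ∈ C

/-- Closed under isomorphisms. -/
def IsoClosed (C : Set (ModuleCat.{u} R)) : Prop :=
  ∀ (X Y : ModuleCat.{u} R), (X ≃ₗ[R] Y) → X ∈ C → Y ∈ C

/-- Closed under images of morphisms between objects of C. -/
def ImageClosed (C : Set (ModuleCat.{u} R)) : Prop :=
  ∀ (X Y : ModuleCat.{u} R) (f : X →ₗ[R] Y), X ∈ C → Y ∈ C →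
    ModuleCat.of R (LinearMap.range f) ∈ C

def IsTorsionClass (C : Set (ModuleCat.{u} R)) : Prop := QuotClosed R C ∧ ExtClosed R C

def IsTorsionFreeClass (C : Set (ModuleCat.{u} R)) : Prop := SubClosed R C ∧ ExtClosed R C

/-- IE-closed: closed under (isomorphisms,) images and extensions. -/
def IsIEClosed (C : Set (ModuleCat.{u} R)) : Prop :=
  IsoClosed R C ∧ ImageClosed R C ∧ ExtClosed R C

/-- The smallest torsion class containing `C`. -/
def Tcl (C : Set (ModuleCat.{u} R)) : Set (ModuleCat.{u} R) :=
  ⋂₀ {T | IsTorsionClass R T ∧ C ⊆ T}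

/-- The smallest torsion-free class containing `C`. -/
def Fcl (C : Set (ModuleCat.{u} R)) : Set (ModuleCat.{u} R) :=
  ⋂₀ {F | IsTorsionFreeClass R F ∧ C ⊆ F}

/-- `Fac M`: quotients of finite direct sums of copies of `M`. -/
def FacSet (M : ModuleCat.{u} R) : Set (ModuleCat.{u} R) :=
  {X | ∃ (n : ℕ) (f : (Fin n → M) →ₗ[R] X), Function.Surjective f}

/-- `Sub N`: submodules of finite direct sums of copies of `N`. -/
def SubSet (N : ModuleCat.{u} R) : Set (ModuleCat.{u} R) :=
  {X | ∃ (n : ℕ) (f : X →ₗ[R] (Fin n → N)), Function.Injective f}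

/-- Left perpendicular of a class: modules with no nonzero map to any member. -/
def PerpL (S : Set (ModuleCat.{u} R)) : Set (ModuleCat.{u} R) :=
  {X | ∀ Y ∈ S, ∀ f : X →ₗ[R] Y, f = 0}

/-- `M^⊥`: modules receiving no nonzero map from `M`. -/
def PerpOfMod (M : ModuleCat.{u} R) : Set (ModuleCat.{u} R) :=
  {Y | ∀ f : M →ₗ[R] Y, f = 0}

/-- `g : F → M` is a right `C`-approximation of `M`. -/
def IsRightApprox (C : Set (ModuleCat.{u} R)) (F M : ModuleCat.{u} R) (g : F →ₗ[R] M) : Prop :=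
  F ∈ C ∧ ∀ X ∈ C, ∀ a : X →ₗ[R] M, ∃ b : X →ₗ[R] F, g.comp b = a

/-- `g : M → F` is a left `C`-approximation of `M`. -/
def IsLeftApprox (C : Set (ModuleCat.{u} R)) (M F : ModuleCat.{u} R) (g : M →ₗ[R] F) : Prop :=
  F ∈ C ∧ ∀ X ∈ C, ∀ a : M →ₗ[R] X, ∃ b : F →ₗ[R] X, b.comp g = a

def ContravariantlyFinite (C : Set (ModuleCat.{u} R)) : Prop :=
  ∀ M : ModuleCat.{u} R, ∃ (F : ModuleCat.{u} R) (g : F →ₗ[R] M), IsRightApprox R C F M g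

def CovariantlyFinite (C : Set (ModuleCat.{u} R)) : Prop :=
  ∀ M : ModuleCat.{u} R, ∃ (F : ModuleCat.{u} R) (g : M →ₗ[R] F), IsLeftApprox R C M F g

def FunctoriallyFinite (C : Set (ModuleCat.{u} R)) : Prop :=
  CovariantlyFinite R C ∧ ContravariantlyFinite R C

/-- `X` is a direct summand (retract) of `Y`. -/
def IsRetract (X Y : ModuleCat.{u} R) : Prop :=
  ∃ (i : X →ₗ[R] Y) (p : Y →ₗ[R] X), p.comp i = LinearMap.id

/-- `M` is basic (multiplicity-free): complementary summands share no nonzero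
common direct summand. -/
def Basic (M : ModuleCat.{u} R) : Prop :=
  ∀ (A B : ModuleCat.{u} R), (M ≃ₗ[R] (A × B)) →
    ∀ X : ModuleCat.{u} R, IsRetract R X A → IsRetract R X B → Subsingleton X

/-- `add` of a class: direct summands of finite direct sums of members. -/
def AddSet (S : Set (ModuleCat.{u} R)) : Set (ModuleCat.{u} R) :=
  {X | ∃ (n : ℕ) (f : Fin n → ModuleCat.{u} R), (∀ i, f i ∈ S) ∧
    IsRetract R X (ModuleCat.of R ((i : Fin n) → (f i)))}

/-- `P` is Ext-projective relative to `C`: every short exact sequence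
`0 → K → E → P → 0` with `K ∈ C` splits (i.e. `Ext¹(P, C) = 0`). -/
def ExtProjIn (C : Set (ModuleCat.{u} R)) (P : ModuleCat.{u} R) : Prop :=
  ∀ (E : ModuleCat.{u} R) (g : E →ₗ[R] P), Function.Surjective g →
    ModuleCat.of R (LinearMap.ker g) ∈ C → ∃ s : P →ₗ[R] E, g.comp s = LinearMap.id

/-- `I` is Ext-injective relative to `C`: every short exact sequence
`0 → I → E → Q → 0` with `Q ∈ C` splits (i.e. `Ext¹(C, I) = 0`). -/
def ExtInjIn (C : Set (ModuleCat.{u} R)) (I : ModuleCat.{u} R) : Prop :=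
  ∀ (E : ModuleCat.{u} R) (f : I →ₗ[R] E), Function.Injective f →
    ModuleCat.of R (E ⧸ LinearMap.range f) ∈ C → ∃ r : E →ₗ[R] I, r.comp f = LinearMap.id

/-- Support τ-tilting module, via the Adachi–Iyama–Reiten characterization:
`Fac M` is a functorially finite torsion class and `add M` consists exactly of
the Ext-projective objects of `Fac M`. -/
def IsSupportTauTilting (M : ModuleCat.{u} R) : Prop :=
  IsTorsionClass R (FacSet R M) ∧ FunctoriallyFinite R (FacSet R M) ∧
  ExtProjIn R (FacSet R M) M ∧
  ∀ P : ModuleCat.{u} R, P ∈ FacSet R M → ExtProjIn R (FacSet R M) P → P ∈ AddSet R {M}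

/-- Support τ⁻-tilting module (dual characterization). -/
def IsSupportTauMinusTilting (N : ModuleCat.{u} R) : Prop :=
  IsTorsionFreeClass R (SubSet R N) ∧ FunctoriallyFinite R (SubSet R N) ∧
  ExtInjIn R (SubSet R N) N ∧
  ∀ I : ModuleCat.{u} R, I ∈ SubSet R N → ExtInjIn R (SubSet R N) I → I ∈ AddSet R {N}

/-- Canonical twin support τ-tilting module. -/
def IsCanonicalPair (M N : ModuleCat.{u} R) : Prop :=
  IsSupportTauTilting R M ∧ Basic R M ∧ IsSupportTauMinusTilting R N ∧ Basic R N ∧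
  FacSet R M = Tcl R (FacSet R M ∩ SubSet R N) ∧
  SubSet R N = Fcl R (FacSet R M ∩ SubSet R N)

/-- `Cok(C)`: cokernels of morphisms between objects of `C`. -/
def CokSet (C : Set (ModuleCat.{u} R)) : Set (ModuleCat.{u} R) :=
  {Z | ∃ X ∈ C, ∃ Y ∈ C, ∃ (f : X →ₗ[R] Y) (g : Y →ₗ[R] Z),
    Function.Surjective g ∧ LinearMap.range f = LinearMap.ker g}

def IsICEClosed (C : Set (ModuleCat.{u} R)) : Prop :=
  IsIEClosed R C ∧ CokSet R C ⊆ C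

/-- Support of a module with respect to a family of (indecomposable projective)
modules `P i`. -/
def SuppM {ι : Type u} (P : ι → ModuleCat.{u} R) (X : ModuleCat.{u} R) : Set ι :=
  {i | ∃ f : (P i) →ₗ[R] X, f ≠ 0}

/-- Support of a subcategory. -/
def SuppC {ι : Type u} (P : ι → ModuleCat.{u} R) (C : Set (ModuleCat.{u} R)) : Set ι :=
  ⋃ X ∈ C, SuppM R P X

/-- Right perpendicular of a class: modules receiving no nonzero map from any member. -/
def PerpR (S : Set (ModuleCat.{u} R)) : Set (ModuleCat.{u} R) :=
  {Y | ∀ X ∈ S, ∀ f : X →ₗ[R] Y, f = 0}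

/-- Torsion pair. -/
def IsTorsionPair (T F : Set (ModuleCat.{u} R)) : Prop :=
  IsTorsionClass R T ∧ IsTorsionFreeClass R F ∧ F = PerpR R T ∧ T = PerpL R F

/-- If the torsion class `T` and the torsion-free class `F` are
contravariantly finite, then `T ∩ F` is contravariantly finite; explicitly, if
`g : F₀ → M` is a right `F`-approximation and `t ⊆ F₀` is the torsion submodule
with respect to `T` (its inclusion being a right `T`-approximation of `F₀`),
then `g ∘ (inclusion of t)` is a right `T ∩ F`-approximation of `M`. -/
theorem stmt0 (k : Type u) [Field k] [Algebra k R] [FiniteDimensional k R]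
    (T F : Set (ModuleCat.{u} R)) (hT : IsTorsionClass R T) (hF : IsTorsionFreeClass R F)
    (hTc : ContravariantlyFinite R T) (hFc : ContravariantlyFinite R F) :
    (∀ (M F₀ : ModuleCat.{u} R) (g : F₀ →ₗ[R] M), IsRightApprox R F F₀ M g →
      ∀ t : Submodule R F₀, IsRightApprox R T (ModuleCat.of R t) F₀ t.subtype →
        IsRightApprox R (T ∩ F) (ModuleCat.of R t) M (g.comp t.subtype)) ∧
    ((∀ X : ModuleCat.{u} R, ∃ t : Submodule R X,
        IsRightApprox R T (ModuleCat.of R t) X t.subtype) →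
      ContravariantlyFinite R (T ∩ F)) := by
  have main : ∀ (M F₀ : ModuleCat.{u} R) (g : F₀ →ₗ[R] M), IsRightApprox R F F₀ M g →
      ∀ t : Submodule R F₀, IsRightApprox R T (ModuleCat.of R t) F₀ t.subtype →
        IsRightApprox R (T ∩ F) (ModuleCat.of R t) M (g.comp t.subtype) := by
    intro M F₀ g hg t ht
    constructor
    · constructor
      · exact ht.1
      · exact hF.1 (ModuleCat.of R t) F₀ t.subtype t.injective_subtype hg.1
    · intro X hX a
      obtain ⟨b, hb⟩ := hg.2 X hX.2 a
      obtain ⟨c, hc⟩ := ht.2 X hX.1 b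
      exact ⟨c, by rw [LinearMap.comp_assoc, hc, hb]⟩
  refine ⟨main, fun h M => ?_⟩
  obtain ⟨F₀, g, hg⟩ := hFc M
  obtain ⟨t, ht⟩ := h F₀
  exact ⟨ModuleCat.of R t, g.comp t.subtype, main M F₀ g hg t ht⟩
end

section
/- Let Λ be a finite-dimensional algebra. A full subcategory C of mod Λ closed under images and extensions (an IE-closed subcategory) satisfies C = T(C) ∩ F(C), where T(C) is the smallest torsion class containing C and F(C) is the smallest torsion-free class containing C. -/
/- Common definitions: subcategories of the module category of a
finite-dimensional algebra, torsion theory, approximations,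
(support τ-tilting)-style notions, etc. -/

universe u

variable (R : Type u) [Ring R]

/-! `T(C)` consists of the modules filtered by quotients of objects of `C`, and `F(C)` of those
filtered by submodules of objects of `C`. A quotient of an object of `C` that embeds into an
object of `C` is an image of a morphism of `C`, hence lies in `C`. Pulling back along the top
factor of a `Fac C`-filtration shows, by induction, that every module of `T(C)` embedding into an
object of `C` lies in `C`; pushing out along the bottom factor of a `Sub C`-filtration then shows,
again by induction, that every module of `T(C) ∩ F(C)` lies in `C`. -/

section IEClosed

variable {R}

namespace Submodule

variable {M N : Type*} [AddCommGroup M] [Module R M] [AddCommGroup N] [Module R N]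

theorem mapQ_surjective_of_surjective (p : Submodule R M) (q : Submodule R N) {f : M →ₗ[R] N}
    (hf : Function.Surjective f) (h : p ≤ q.comap f) : Function.Surjective (p.mapQ q f h) := by
  rw [← LinearMap.range_eq_top, range_mapQ, LinearMap.range_eq_top.mpr hf, map_top, range_mkQ]

theorem mapQ_injective_of_comap_eq (p : Submodule R M) (q : Submodule R N) {f : M →ₗ[R] N}
    (h : q.comap f = p) : Function.Injective (p.mapQ q f h.ge) := by
  rw [← LinearMap.ker_eq_bot, ker_mapQ, h, mkQ_map_self]

end Submodule

def quotientsOf (C : Set (ModuleCat.{u} R)) : Set (ModuleCat.{u} R) :=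
  {X | ∃ W ∈ C, ∃ f : W →ₗ[R] X, Function.Surjective f}

def submodulesOf (C : Set (ModuleCat.{u} R)) : Set (ModuleCat.{u} R) :=
  {X | ∃ W ∈ C, ∃ f : X →ₗ[R] W, Function.Injective f}

variable {C : Set (ModuleCat.{u} R)}

variable (C) in
theorem subset_quotientsOf : C ⊆ quotientsOf C :=
  fun X hX => ⟨X, hX, LinearMap.id, Function.surjective_id⟩

variable (C) in
theorem subset_submodulesOf : C ⊆ submodulesOf C :=
  fun X hX => ⟨X, hX, LinearMap.id, Function.injective_id⟩

theorem mem_quotientsOf_of_surjective {X Y : ModuleCat.{u} R} (hX : X ∈ quotientsOf C)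
    (f : X →ₗ[R] Y) (hf : Function.Surjective f) : Y ∈ quotientsOf C := by
  obtain ⟨W, hW, p, hp⟩ := hX
  exact ⟨W, hW, f ∘ₗ p, hf.comp hp⟩

theorem mem_submodulesOf_of_injective {X Y : ModuleCat.{u} R} (hY : Y ∈ submodulesOf C)
    (f : X →ₗ[R] Y) (hf : Function.Injective f) : X ∈ submodulesOf C := by
  obtain ⟨W, hW, i, hi⟩ := hY
  exact ⟨W, hW, i ∘ₗ f, hi.comp hf⟩

theorem IsIEClosed.mem_of_mem_quotientsOf_of_mem_submodulesOf (hC : IsIEClosed R C)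
    {X : ModuleCat.{u} R} (hQ : X ∈ quotientsOf C) (hS : X ∈ submodulesOf C) : X ∈ C := by
  obtain ⟨W₁, hW₁, p, hp⟩ := hQ
  obtain ⟨W₂, hW₂, i, hi⟩ := hS
  have hrange : LinearMap.range (i ∘ₗ p) = LinearMap.range i := by
    rw [LinearMap.range_comp, LinearMap.range_eq_top.mpr hp, Submodule.map_top]
  exact hC.1 _ X ((LinearEquiv.ofEq _ _ hrange).trans (LinearEquiv.ofInjective i hi).symm)
    (hC.2.1 W₁ W₂ (i ∘ₗ p) hW₁ hW₂)

theorem ExtClosed.mem_quotientsOf_of_extension (hC : ExtClosed R C) {X : ModuleCat.{u} R}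
    (N : Submodule R X) (hN : ModuleCat.of R N ∈ C)
    (hQ : ModuleCat.of R (X ⧸ N) ∈ quotientsOf C) : X ∈ quotientsOf C := by
  obtain ⟨W, hW, p, hp⟩ := hQ
  -- the pullback of `N.mkQ` along `p`: an extension of `W` by `N` mapping onto `X`
  let P : Submodule R (X × W) := LinearMap.ker (N.mkQ.coprod (-p))
  have mem_P : ∀ x w, (x, w) ∈ P ↔ N.mkQ x = p w := fun x w => by
    simp [P, add_neg_eq_zero]
  let f : N →ₗ[R] P := LinearMap.codRestrict P (LinearMap.inl R X W ∘ₗ N.subtype)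
    fun n => (mem_P _ _).2 (by simp)
  let g : P →ₗ[R] W := LinearMap.snd R X W ∘ₗ P.subtype
  have hf : Function.Injective f := fun n n' h => Subtype.ext (congrArg (·.1.1) h)
  have hg : Function.Surjective g := fun w => by
    obtain ⟨x, hx⟩ := N.mkQ_surjective (p w)
    exact ⟨⟨(x, w), (mem_P x w).2 hx⟩, rfl⟩
  have hfg : LinearMap.range f = LinearMap.ker g := by
    ext ⟨⟨x, w⟩, hxw⟩
    constructor
    · rintro ⟨n, hn⟩
      exact LinearMap.mem_ker.2 (congrArg (·.1.2) hn).symm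
    · intro hw
      obtain rfl : w = 0 := LinearMap.mem_ker.1 hw
      have hx : x ∈ N := by simpa using (mem_P x 0).1 hxw
      exact ⟨⟨x, hx⟩, rfl⟩
  refine ⟨.of R P, hC (.of R N) (.of R P) W f g hf hg hfg hN hW,
    LinearMap.fst R X W ∘ₗ P.subtype, fun x => ?_⟩
  obtain ⟨w, hw⟩ := hp (N.mkQ x)
  exact ⟨⟨(x, w), (mem_P x w).2 hw.symm⟩, rfl⟩

theorem ExtClosed.mem_submodulesOf_of_extension (hC : ExtClosed R C) {X : ModuleCat.{u} R}
    (N : Submodule R X) (hN : ModuleCat.of R N ∈ submodulesOf C)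
    (hQ : ModuleCat.of R (X ⧸ N) ∈ C) : X ∈ submodulesOf C := by
  obtain ⟨W, hW, m, hm⟩ := hN
  -- the pushout of `N.subtype` along `m`: an extension of `X ⧸ N` by `W` containing `X`
  let D : Submodule R (W × X) := LinearMap.range (m.prod (-N.subtype))
  have mem_D : ∀ w x, (w, x) ∈ D ↔ ∃ n : N, m n = w ∧ -(n : X) = x := fun w x => by
    simp [D, Prod.ext_iff]
  let f : W →ₗ[R] (W × X) ⧸ D := D.mkQ ∘ₗ LinearMap.inl R W X
  have hD : D ≤ LinearMap.ker (N.mkQ ∘ₗ LinearMap.snd R W X) := by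
    rintro _ ⟨n, rfl⟩
    simp
  let g : (W × X) ⧸ D →ₗ[R] X ⧸ N := D.liftQ _ hD
  have hf : Function.Injective f := by
    rw [← LinearMap.ker_eq_bot, Submodule.eq_bot_iff]
    intro w hw
    obtain ⟨n, rfl, hn⟩ := (mem_D w 0).1 ((Submodule.Quotient.mk_eq_zero D).1 hw)
    rw [neg_eq_zero, ZeroMemClass.coe_eq_zero] at hn
    rw [hn, map_zero]
  have hg : Function.Surjective g := fun q => by
    obtain ⟨x, rfl⟩ := N.mkQ_surjective q
    exact ⟨D.mkQ (0, x), rfl⟩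
  have hfg : LinearMap.range f = LinearMap.ker g := by
    ext z
    obtain ⟨⟨w, x⟩, rfl⟩ := D.mkQ_surjective z
    constructor
    · rintro ⟨w', hw'⟩
      rw [LinearMap.mem_ker, ← hw']
      simp [f, g]
    · intro hz
      have hx : x ∈ N := by simpa [g] using hz
      refine ⟨w + m ⟨x, hx⟩, (Submodule.Quotient.eq D).2 ((mem_D _ _).2 ⟨⟨x, hx⟩, ?_, ?_⟩)⟩ <;> simp
  refine ⟨.of R ((W × X) ⧸ D), hC W (.of R ((W × X) ⧸ D)) (.of R (X ⧸ N)) f g hf hg hfg hW hQ,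
    D.mkQ ∘ₗ LinearMap.inr R W X, ?_⟩
  rw [← LinearMap.ker_eq_bot, Submodule.eq_bot_iff]
  intro x hx
  obtain ⟨n, hn, rfl⟩ := (mem_D 0 x).1 ((Submodule.Quotient.mk_eq_zero D).1 hx)
  rw [hm (hn.trans (map_zero m).symm), Submodule.coe_zero, neg_zero]

inductive FacFiltered (C : Set (ModuleCat.{u} R)) : ModuleCat.{u} R → Prop
  | of_mem {X : ModuleCat.{u} R} : X ∈ quotientsOf C → FacFiltered C X
  | extension {X : ModuleCat.{u} R} (N : Submodule R X) : FacFiltered C (ModuleCat.of R N) →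
      ModuleCat.of R (X ⧸ N) ∈ quotientsOf C → FacFiltered C X

inductive SubFiltered (C : Set (ModuleCat.{u} R)) : ModuleCat.{u} R → Prop
  | of_mem {X : ModuleCat.{u} R} : X ∈ submodulesOf C → SubFiltered C X
  | extension {X : ModuleCat.{u} R} (N : Submodule R X) : ModuleCat.of R N ∈ submodulesOf C →
      SubFiltered C (ModuleCat.of R (X ⧸ N)) → SubFiltered C X

theorem FacFiltered.of_surjective {X : ModuleCat.{u} R} (hX : FacFiltered C X) :
    ∀ {Z : ModuleCat.{u} R} (e : X →ₗ[R] Z), Function.Surjective e → FacFiltered C Z := by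
  induction hX with
  | of_mem hX => exact fun e he => .of_mem (mem_quotientsOf_of_surjective hX e he)
  | extension N _ hQ ih =>
    intro Z e he
    exact .extension (N.map e) (ih (e.submoduleMap N) (e.submoduleMap_surjective N))
      (mem_quotientsOf_of_surjective hQ _
        (N.mapQ_surjective_of_surjective (N.map e) he (N.le_comap_map e)))

theorem FacFiltered.of_ker {X : ModuleCat.{u} R} (hX : FacFiltered C X) :
    ∀ {B : ModuleCat.{u} R} (g : B →ₗ[R] X), Function.Surjective g →
      FacFiltered C (ModuleCat.of R (LinearMap.ker g)) → FacFiltered C B := by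
  induction hX with
  | of_mem hX =>
    intro B g hg hker
    exact .extension _ hker
      (mem_quotientsOf_of_surjective hX _ (g.quotKerEquivOfSurjective hg).symm.surjective)
  | @extension X N _ hQ ih =>
    intro B g hg hker
    have hker_le : LinearMap.ker g ≤ N.comap g := fun b hb => by
      simp [LinearMap.mem_ker.1 hb]
    have hg' : Function.Surjective (g.restrict fun _ h => h : N.comap g →ₗ[R] N) := fun n => by
      obtain ⟨b, hb⟩ := hg n
      exact ⟨⟨b, by simp [hb]⟩, Subtype.ext hb⟩
    have hker' : FacFiltered C (ModuleCat.of R (LinearMap.ker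
        (g.restrict fun _ h => h : N.comap g →ₗ[R] N))) := by
      rw [LinearMap.ker_restrict]
      exact hker.of_surjective (Submodule.comapSubtypeEquivOfLe hker_le).symm.toLinearMap
        (LinearEquiv.surjective _)
    let e : (B ⧸ N.comap g) ≃ₗ[R] X ⧸ N := .ofBijective (Submodule.mapQ _ N g le_rfl)
      ⟨Submodule.mapQ_injective_of_comap_eq _ N rfl,
        Submodule.mapQ_surjective_of_surjective _ N hg le_rfl⟩
    exact .extension _ (ih _ hg' hker') (mem_quotientsOf_of_surjective hQ _ e.symm.surjective)

theorem SubFiltered.of_injective {X : ModuleCat.{u} R} (hX : SubFiltered C X) :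
    ∀ {W : ModuleCat.{u} R} (i : W →ₗ[R] X), Function.Injective i → SubFiltered C W := by
  induction hX with
  | of_mem hX => exact fun i hi => .of_mem (mem_submodulesOf_of_injective hX i hi)
  | @extension X N hN _ ih =>
    intro W i hi
    have hi' : Function.Injective (i.restrict fun _ h => h : N.comap i →ₗ[R] N) :=
      fun a b h => Subtype.ext (hi (congrArg Subtype.val h))
    exact .extension (N.comap i) (mem_submodulesOf_of_injective hN _ hi')
      (ih _ (Submodule.mapQ_injective_of_comap_eq _ N rfl))

theorem SubFiltered.of_range {A : ModuleCat.{u} R} (hA : SubFiltered C A) :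
    ∀ {B : ModuleCat.{u} R} (f : A →ₗ[R] B), Function.Injective f →
      SubFiltered C (ModuleCat.of R (B ⧸ LinearMap.range f)) → SubFiltered C B := by
  induction hA with
  | of_mem hA =>
    intro B f hf hQ
    exact .extension _ (mem_submodulesOf_of_injective hA _
      (LinearEquiv.ofInjective f hf).symm.injective) hQ
  | @extension A N hN _ ih =>
    intro B f hf hQ
    have hQ' : SubFiltered C (ModuleCat.of R ((B ⧸ N.map f) ⧸ LinearMap.range
        (N.mapQ (N.map f) f (N.le_comap_map f)))) := by
      rw [Submodule.range_mapQ]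
      exact hQ.of_injective
        (Submodule.quotientQuotientEquivQuotient _ _ LinearMap.map_le_range).toLinearMap
        (LinearEquiv.injective _)
    exact .extension (N.map f)
      (mem_submodulesOf_of_injective hN _ (N.equivMapOfInjective f hf).symm.injective)
      (ih _ (Submodule.mapQ_injective_of_comap_eq _ _ (N.comap_map_eq_of_injective hf)) hQ')

variable (C) in
theorem isTorsionClass_facFiltered : IsTorsionClass R {X | FacFiltered C X} :=
  ⟨fun _ _ e he hX => FacFiltered.of_surjective hX e he,
    fun _ _ _ f g hf hg hfg hA hX => FacFiltered.of_ker hX g hg <| FacFiltered.of_surjective hA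
      ((LinearEquiv.ofInjective f hf).trans (LinearEquiv.ofEq _ _ hfg)).toLinearMap
      (LinearEquiv.surjective _)⟩

variable (C) in
theorem isTorsionFreeClass_subFiltered : IsTorsionFreeClass R {X | SubFiltered C X} :=
  ⟨fun _ _ i hi hY => SubFiltered.of_injective hY i hi,
    fun _ _ _ f g hf hg hfg hA hX => SubFiltered.of_range hA f hf <| SubFiltered.of_injective hX
      ((Submodule.quotEquivOfEq _ _ hfg).trans (g.quotKerEquivOfSurjective hg)).toLinearMap
      (LinearEquiv.injective _)⟩

variable (C) in
theorem subset_tcl : C ⊆ Tcl R C :=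
  Set.subset_sInter fun _ hT => hT.2

variable (C) in
theorem subset_fcl : C ⊆ Fcl R C :=
  Set.subset_sInter fun _ hF => hF.2

variable (C) in
theorem tcl_subset_facFiltered : Tcl R C ⊆ {X | FacFiltered C X} :=
  Set.sInter_subset_of_mem
    ⟨isTorsionClass_facFiltered C, fun _ hX => .of_mem (subset_quotientsOf C hX)⟩

variable (C) in
theorem fcl_subset_subFiltered : Fcl R C ⊆ {X | SubFiltered C X} :=
  Set.sInter_subset_of_mem
    ⟨isTorsionFreeClass_subFiltered C, fun _ hX => .of_mem (subset_submodulesOf C hX)⟩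

theorem IsIEClosed.mem_of_facFiltered_of_mem_submodulesOf (hC : IsIEClosed R C)
    {X : ModuleCat.{u} R} (hX : FacFiltered C X) : X ∈ submodulesOf C → X ∈ C := by
  induction hX with
  | of_mem hX => exact hC.mem_of_mem_quotientsOf_of_mem_submodulesOf hX
  | extension N _ hQ ih =>
    intro hS
    have hN := ih (mem_submodulesOf_of_injective hS N.subtype N.injective_subtype)
    exact hC.mem_of_mem_quotientsOf_of_mem_submodulesOf
      (hC.2.2.mem_quotientsOf_of_extension N hN hQ) hS

theorem IsIEClosed.mem_of_subFiltered_of_facFiltered (hC : IsIEClosed R C)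
    {X : ModuleCat.{u} R} (hX : SubFiltered C X) : FacFiltered C X → X ∈ C := by
  induction hX with
  | of_mem hX => exact fun hT => hC.mem_of_facFiltered_of_mem_submodulesOf hT hX
  | extension N hN _ ih =>
    intro hT
    have hQ := ih (hT.of_surjective N.mkQ N.mkQ_surjective)
    exact hC.mem_of_facFiltered_of_mem_submodulesOf hT
      (hC.2.2.mem_submodulesOf_of_extension N hN hQ)

end IEClosed

theorem stmt2 (C : Set (ModuleCat.{u} R)) (hC : IsIEClosed R C) :
    C = Tcl R C ∩ Fcl R C := by
  refine (Set.subset_inter (subset_tcl C) (subset_fcl C)).antisymm ?_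
  rintro X ⟨hT, hF⟩
  exact hC.mem_of_subFiltered_of_facFiltered (fcl_subset_subFiltered C hF)
    (tcl_subset_facFiltered C hT)
end

section
/- Let Λ be a finite-dimensional algebra and C a subcategory of mod Λ. Then C is IE-closed (closed under images and extensions) if and only if there exist a torsion class T and a torsion-free class F in mod Λ with C = T ∩ F. -/
/- Common definitions: subcategories of the module category of a
finite-dimensional algebra, torsion theory, approximations,
(support τ-tilting)-style notions, etc. -/

universe u

variable (R : Type u) [Ring R]

inductive FiltT (D : Set (ModuleCat.{u} R)) : ModuleCat.{u} R → Prop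
  | zero (X : ModuleCat.{u} R) (hX : Subsingleton X) : FiltT D X
  | cons (A B Q : ModuleCat.{u} R) (f : A →ₗ[R] B) (g : B →ₗ[R] Q)
      (hf : Function.Injective f) (hg : Function.Surjective g)
      (hfg : LinearMap.range f = LinearMap.ker g)
      (hA : FiltT D A) (hQ : Q ∈ D) : FiltT D B

inductive FiltF (D : Set (ModuleCat.{u} R)) : ModuleCat.{u} R → Prop
  | zero (X : ModuleCat.{u} R) (hX : Subsingleton X) : FiltF D X
  | cons (S B Q : ModuleCat.{u} R) (f : S →ₗ[R] B) (g : B →ₗ[R] Q)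
      (hf : Function.Injective f) (hg : Function.Surjective g)
      (hfg : LinearMap.range f = LinearMap.ker g)
      (hS : S ∈ D) (hQ : FiltF D Q) : FiltF D B

lemma ie_factor_surj {B Q Z : ModuleCat.{u} R} (g : B →ₗ[R] Q) (hg : Function.Surjective g)
    (φ : B →ₗ[R] Z) (hker : LinearMap.ker g ≤ LinearMap.ker φ) :
    ∃ ψ : Q →ₗ[R] Z, ∀ b, ψ (g b) = φ b := by
  refine ⟨((LinearMap.ker g).liftQ φ hker).comp
    (g.quotKerEquivOfSurjective hg).symm.toLinearMap, fun b => ?_⟩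
  have h : (g.quotKerEquivOfSurjective hg).symm (g b) = Submodule.Quotient.mk b := by
    apply (g.quotKerEquivOfSurjective hg).injective
    rw [LinearEquiv.apply_symm_apply]; rfl
  simp only [LinearMap.comp_apply, LinearEquiv.coe_toLinearMap, h]
  exact Submodule.liftQ_apply _ _ _

lemma ie_factor_inj {X₁ X W : ModuleCat.{u} R} (f : X₁ →ₗ[R] X) (hf : Function.Injective f)
    (φ : W →ₗ[R] X) (hran : ∀ w, φ w ∈ LinearMap.range f) :
    ∃ ψ : W →ₗ[R] X₁, ∀ w, f (ψ w) = φ w := by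
  refine ⟨(LinearEquiv.ofInjective f hf).symm.toLinearMap.comp
      (φ.codRestrict (LinearMap.range f) hran), fun w => ?_⟩
  simp only [LinearMap.comp_apply, LinearEquiv.coe_toLinearMap]
  have h2 : f ((LinearEquiv.ofInjective f hf).symm (φ.codRestrict (LinearMap.range f) hran w))
      = ((LinearEquiv.ofInjective f hf) ((LinearEquiv.ofInjective f hf).symm
        (φ.codRestrict (LinearMap.range f) hran w)) : X) := by
    rw [LinearEquiv.ofInjective_apply]
  rw [h2, LinearEquiv.apply_symm_apply]; rfl

lemma ie_filtT_iso {D : Set (ModuleCat.{u} R)} {X Y : ModuleCat.{u} R}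
    (e : X ≃ₗ[R] Y) (hX : FiltT R D X) : FiltT R D Y := by
  cases hX with
  | zero X h =>
    exact FiltT.zero Y ⟨fun a b => e.symm.injective (Subsingleton.elim _ _)⟩
  | cons A B Q f g hf hg hfg hA hQ =>
    refine FiltT.cons A Y Q (e.toLinearMap.comp f) (g.comp e.symm.toLinearMap)
      (e.injective.comp hf) (hg.comp e.symm.surjective) ?_ hA hQ
    ext y
    simp only [LinearMap.mem_range, LinearMap.mem_ker, LinearMap.comp_apply,
      LinearEquiv.coe_toLinearMap]
    constructor
    · rintro ⟨a, rfl⟩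
      rw [e.symm_apply_apply]
      have : f a ∈ LinearMap.ker g := hfg ▸ LinearMap.mem_range_self f a
      exact this
    · intro hy
      have : e.symm y ∈ LinearMap.range f := hfg.symm ▸ hy
      obtain ⟨a, ha⟩ := this
      exact ⟨a, by rw [ha, e.apply_symm_apply]⟩

lemma ie_filtF_iso {D : Set (ModuleCat.{u} R)} {X Y : ModuleCat.{u} R}
    (e : X ≃ₗ[R] Y) (hX : FiltF R D X) : FiltF R D Y := by
  cases hX with
  | zero X h =>
    exact FiltF.zero Y ⟨fun a b => e.symm.injective (Subsingleton.elim _ _)⟩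
  | cons S B Q f g hf hg hfg hS hQ =>
    refine FiltF.cons S Y Q (e.toLinearMap.comp f) (g.comp e.symm.toLinearMap)
      (e.injective.comp hf) (hg.comp e.symm.surjective) ?_ hS hQ
    ext y
    simp only [LinearMap.mem_range, LinearMap.mem_ker, LinearMap.comp_apply,
      LinearEquiv.coe_toLinearMap]
    constructor
    · rintro ⟨a, rfl⟩
      rw [e.symm_apply_apply]
      have : f a ∈ LinearMap.ker g := hfg ▸ LinearMap.mem_range_self f a
      exact this
    · intro hy
      have : e.symm y ∈ LinearMap.range f := hfg.symm ▸ hy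
      obtain ⟨a, ha⟩ := this
      exact ⟨a, by rw [ha, e.apply_symm_apply]⟩

lemma ie_mem_filtT_of_mem {D : Set (ModuleCat.{u} R)} {X : ModuleCat.{u} R}
    (hX : X ∈ D) : FiltT R D X := by
  refine FiltT.cons (ModuleCat.of R PUnit.{u+1}) X X 0 LinearMap.id
    (fun a b _ => Subsingleton.elim a b) Function.surjective_id ?_
    (FiltT.zero _ ⟨fun a b => rfl⟩) hX
  rw [LinearMap.range_zero, LinearMap.ker_id]

lemma ie_mem_filtF_of_mem {D : Set (ModuleCat.{u} R)} {X : ModuleCat.{u} R}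
    (hX : X ∈ D) : FiltF R D X := by
  refine FiltF.cons X X (ModuleCat.of R PUnit.{u+1}) LinearMap.id 0
    (fun a b h => h) (fun y => ⟨0, Subsingleton.elim _ _⟩) ?_
    hX (FiltF.zero _ ⟨fun a b => rfl⟩)
  rw [LinearMap.range_id, LinearMap.ker_zero]

lemma ie_filtT_quot {D : Set (ModuleCat.{u} R)} (hD : QuotClosed R D)
    {B : ModuleCat.{u} R} (hB : FiltT R D B) :
    ∀ (Y : ModuleCat.{u} R) (p : B →ₗ[R] Y), Function.Surjective p → FiltT R D Y := by
  induction hB with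
  | zero X h =>
    intro Y p hp
    refine FiltT.zero Y ⟨fun a b => ?_⟩
    obtain ⟨a', rfl⟩ := hp a
    obtain ⟨b', rfl⟩ := hp b
    exact congrArg p (Subsingleton.elim _ _)
  | cons A B Q f g hf hg hfg hA hQ ih =>
    intro Y p hp
    set N : Submodule R Y := LinearMap.range (p.comp f) with hN
    have h1 : FiltT R D (ModuleCat.of R N) :=
      ih (ModuleCat.of R N) (p.comp f).rangeRestrict (LinearMap.surjective_rangeRestrict _)
    -- quotient Y ⧸ N is a quotient of Q
    obtain ⟨ψ, hψ⟩ := ie_factor_surj R (Z := ModuleCat.of R (Y ⧸ N)) g hg (N.mkQ.comp p) (by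
      intro b hb
      have hb' : b ∈ LinearMap.range f := hfg.symm ▸ hb
      obtain ⟨a, rfl⟩ := hb'
      have hmem : p (f a) ∈ N := ⟨a, rfl⟩
      refine LinearMap.mem_ker.mpr ?_
      show N.mkQ (p (f a)) = 0
      rw [Submodule.mkQ_apply]
      exact (Submodule.Quotient.mk_eq_zero N).mpr hmem)
    have hψs : Function.Surjective ψ := by
      intro z
      obtain ⟨y, rfl⟩ := N.mkQ_surjective z
      obtain ⟨b, rfl⟩ := hp y
      exact ⟨g b, hψ b⟩
    have hQ' : (ModuleCat.of R (Y ⧸ N)) ∈ D := hD Q (ModuleCat.of R (Y ⧸ N)) ψ hψs hQ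
    refine FiltT.cons (ModuleCat.of R N) Y (ModuleCat.of R (Y ⧸ N)) N.subtype N.mkQ
      N.injective_subtype N.mkQ_surjective ?_ h1 hQ'
    rw [Submodule.range_subtype, Submodule.ker_mkQ]

lemma ie_filtF_sub {D : Set (ModuleCat.{u} R)} (hD : SubClosed R D)
    {B : ModuleCat.{u} R} (hB : FiltF R D B) :
    ∀ (W : ModuleCat.{u} R) (ι : W →ₗ[R] B), Function.Injective ι → FiltF R D W := by
  induction hB with
  | zero X h =>
    intro W ι hι
    exact FiltF.zero W ⟨fun a b => hι (Subsingleton.elim _ _)⟩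
  | cons S B Q f g hf hg hfg hS hQ ih =>
    intro W ι hι
    set W' : Submodule R W := LinearMap.ker (g.comp ι) with hW'
    obtain ⟨ψ, hψ⟩ := ie_factor_inj R (W := ModuleCat.of R W') f hf (ι.comp W'.subtype) (by
      rintro ⟨w, hw⟩
      have : g (ι w) = 0 := hw
      have : ι w ∈ LinearMap.ker g := this
      exact hfg ▸ this)
    have hψi : Function.Injective ψ := by
      intro a b h
      have := congrArg f h
      rw [hψ, hψ] at this
      exact Subtype.ext (hι this)
    have hW'D : (ModuleCat.of R W') ∈ D := hD (ModuleCat.of R W') S ψ hψi hS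
    have hliftinj : Function.Injective (W'.liftQ (g.comp ι) (le_refl _)) := by
      rw [← LinearMap.ker_eq_bot]
      exact Submodule.ker_liftQ_eq_bot _ _ _ (le_refl _)
    have hQ' : FiltF R D (ModuleCat.of R (W ⧸ W')) :=
      ih (ModuleCat.of R (W ⧸ W')) (W'.liftQ (g.comp ι) (le_refl _)) hliftinj
    refine FiltF.cons (ModuleCat.of R W') W (ModuleCat.of R (W ⧸ W')) W'.subtype W'.mkQ
      W'.injective_subtype W'.mkQ_surjective ?_ hW'D hQ'
    rw [Submodule.range_subtype, Submodule.ker_mkQ]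

lemma ie_filtT_ext {D : Set (ModuleCat.{u} R)} {X : ModuleCat.{u} R} (hX : FiltT R D X) :
    ∀ (A B : ModuleCat.{u} R) (f : A →ₗ[R] B) (g : B →ₗ[R] X),
      Function.Injective f → Function.Surjective g →
      LinearMap.range f = LinearMap.ker g → FiltT R D A → FiltT R D B := by
  induction hX with
  | zero X h =>
    intro A B f g hf hg hfg hA
    have hker : LinearMap.ker g = ⊤ := by
      ext b; simp [LinearMap.mem_ker, Subsingleton.elim (g b) 0]
    have hfs : Function.Surjective f := by
      rw [← LinearMap.range_eq_top, hfg, hker]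
    exact ie_filtT_iso R (LinearEquiv.ofBijective f ⟨hf, hfs⟩) hA
  | cons X₁ X Q f₁ g₁ hf₁ hg₁ hfg₁ hX₁ hQ ih =>
    intro A B f g hf hg hfg hA
    set B' : Submodule R B := Submodule.comap g (LinearMap.range f₁) with hB'
    -- map A → B'
    have hfmem : ∀ a : A, f a ∈ B' := by
      intro a
      have : f a ∈ LinearMap.ker g := hfg ▸ LinearMap.mem_range_self f a
      have hz : g (f a) = 0 := this
      show g (f a) ∈ LinearMap.range f₁
      rw [hz]; exact Submodule.zero_mem _
    set fA : A →ₗ[R] ModuleCat.of R B' := f.codRestrict B' hfmem with hfA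
    -- map B' → X₁
    obtain ⟨ψ, hψ⟩ := ie_factor_inj R (W := ModuleCat.of R B') f₁ hf₁ (g.comp B'.subtype) (fun (b : ↥B') => Submodule.mem_comap.mp b.2)
    have hψs : Function.Surjective ψ := by
      intro x₁
      obtain ⟨b, hb⟩ := hg (f₁ x₁)
      have hbB' : b ∈ B' := Submodule.mem_comap.mpr
        (by rw [hb]; exact LinearMap.mem_range_self _ _)
      refine ⟨⟨b, hbB'⟩, hf₁ ?_⟩
      rw [hψ]; exact hb
    have hrk : LinearMap.range fA = LinearMap.ker ψ := by
      ext x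
      simp only [LinearMap.mem_range, LinearMap.mem_ker]
      constructor
      · rintro ⟨a, rfl⟩
        apply hf₁
        rw [hψ, map_zero]
        show g (f a) = 0
        have : f a ∈ LinearMap.ker g := hfg ▸ LinearMap.mem_range_self f a
        exact this
      · intro hx
        have h0 : g (B'.subtype x) = 0 := by
          have := hψ x
          rw [hx, map_zero] at this
          exact this.symm
        have hmem : B'.subtype x ∈ LinearMap.range f := hfg.symm ▸ h0
        obtain ⟨a, ha⟩ := hmem
        refine ⟨a, ?_⟩
        apply B'.injective_subtype
        exact ha
    have hfAi : Function.Injective fA := by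
      intro a b h
      exact hf (congrArg Subtype.val h)
    have hB'F : FiltT R D (ModuleCat.of R B') := ih A (ModuleCat.of R B') fA ψ hfAi hψs hrk hA
    -- B is extension of Q by B'
    refine FiltT.cons (ModuleCat.of R B') B Q B'.subtype (g₁.comp g)
      B'.injective_subtype (hg₁.comp hg) ?_ hB'F hQ
    rw [Submodule.range_subtype, LinearMap.ker_comp, ← hfg₁]

lemma ie_filtF_ext {D : Set (ModuleCat.{u} R)} {A : ModuleCat.{u} R} (hA : FiltF R D A) :
    ∀ (B X : ModuleCat.{u} R) (f : A →ₗ[R] B) (g : B →ₗ[R] X),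
      Function.Injective f → Function.Surjective g →
      LinearMap.range f = LinearMap.ker g → FiltF R D X → FiltF R D B := by
  induction hA with
  | zero A h =>
    intro B X f g hf hg hfg hX
    have hrb : LinearMap.range f = ⊥ := by
      ext b
      simp only [LinearMap.mem_range, Submodule.mem_bot]
      constructor
      · rintro ⟨a, rfl⟩; rw [Subsingleton.elim a 0, map_zero]
      · rintro rfl; exact ⟨0, map_zero f⟩
    have hgi : Function.Injective g := by
      rw [← LinearMap.ker_eq_bot, ← hfg, hrb]
    exact ie_filtF_iso R (LinearEquiv.ofBijective g ⟨hgi, hg⟩).symm hX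
  | cons S A Q' f₀ g₀ hf₀ hg₀ hfg₀ hS hQ' ih =>
    intro B X f g hf hg hfg hX
    set N : Submodule R B := LinearMap.range (f.comp f₀) with hNdef
    -- map Q' → B ⧸ N
    obtain ⟨h, hh⟩ := ie_factor_surj R (Z := ModuleCat.of R (B ⧸ N)) g₀ hg₀ (N.mkQ.comp f) (by
      intro a ha
      have : a ∈ LinearMap.range f₀ := hfg₀ ▸ ha
      obtain ⟨s, rfl⟩ := this
      have hmem : f (f₀ s) ∈ N := ⟨s, rfl⟩
      refine LinearMap.mem_ker.mpr ?_
      show N.mkQ (f (f₀ s)) = 0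
      rw [Submodule.mkQ_apply]
      exact (Submodule.Quotient.mk_eq_zero N).mpr hmem)
    have hhi : Function.Injective h := by
      rw [← LinearMap.ker_eq_bot]
      ext q
      simp only [LinearMap.mem_ker, Submodule.mem_bot]
      constructor
      · intro hq
        obtain ⟨a, rfl⟩ := hg₀ q
        rw [hh] at hq
        have : f a ∈ N := by
          have := (Submodule.Quotient.mk_eq_zero N).mp hq
          exact this
        obtain ⟨s, hs⟩ := this
        have : a = f₀ s := hf (by rw [← hs]; rfl)
        rw [this]
        have : f₀ s ∈ LinearMap.ker g₀ := hfg₀ ▸ LinearMap.mem_range_self _ _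
        exact this
      · rintro rfl; exact map_zero h
    have hNle : N ≤ LinearMap.ker g := by
      rintro b ⟨s, rfl⟩
      have : f (f₀ s) ∈ LinearMap.ker g := hfg ▸ LinearMap.mem_range_self f (f₀ s)
      exact this
    set gbar : (B ⧸ N) →ₗ[R] X := N.liftQ g hNle with hgbar
    have hgbars : Function.Surjective gbar := by
      intro x
      obtain ⟨b, rfl⟩ := hg x
      exact ⟨N.mkQ b, Submodule.liftQ_apply _ _ _⟩
    have hrk : LinearMap.range h = LinearMap.ker gbar := by
      ext z
      simp only [LinearMap.mem_range, LinearMap.mem_ker]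
      constructor
      · rintro ⟨q, rfl⟩
        obtain ⟨a, rfl⟩ := hg₀ q
        rw [hh]
        show gbar (N.mkQ (f a)) = 0
        rw [hgbar]
        have : gbar (N.mkQ (f a)) = g (f a) := Submodule.liftQ_apply _ _ _
        rw [this]
        have : f a ∈ LinearMap.ker g := hfg ▸ LinearMap.mem_range_self f a
        exact this
      · intro hz
        obtain ⟨b, rfl⟩ := N.mkQ_surjective z
        have hgb : g b = 0 := by
          have : gbar (N.mkQ b) = g b := Submodule.liftQ_apply _ _ _
          rw [← this]; exact hz
        have : b ∈ LinearMap.range f := hfg.symm ▸ hgb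
        obtain ⟨a, rfl⟩ := this
        exact ⟨g₀ a, hh a⟩
    have hBN : FiltF R D (ModuleCat.of R (B ⧸ N)) :=
      ih (ModuleCat.of R (B ⧸ N)) X h gbar hhi hgbars hrk hX
    refine FiltF.cons S B (ModuleCat.of R (B ⧸ N)) (f.comp f₀) N.mkQ
      (hf.comp hf₀) N.mkQ_surjective ?_ hS hBN
    rw [Submodule.ker_mkQ]

def IEFac (C : Set (ModuleCat.{u} R)) : Set (ModuleCat.{u} R) :=
  {X | ∃ C₀ ∈ C, ∃ g : C₀ →ₗ[R] X, Function.Surjective g}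

def IESub (C : Set (ModuleCat.{u} R)) : Set (ModuleCat.{u} R) :=
  {X | ∃ C₀ ∈ C, ∃ g : X →ₗ[R] C₀, Function.Injective g}

lemma ie_IEFac_quot (C : Set (ModuleCat.{u} R)) : QuotClosed R (IEFac R C) := by
  rintro X Y f hf ⟨C₀, hC₀, g, hg⟩
  exact ⟨C₀, hC₀, f.comp g, hf.comp hg⟩

lemma ie_IESub_sub (C : Set (ModuleCat.{u} R)) : SubClosed R (IESub R C) := by
  rintro X Y f hf ⟨C₀, hC₀, g, hg⟩
  exact ⟨C₀, hC₀, g.comp f, hg.comp hf⟩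

lemma ie_mem_IEFac (C : Set (ModuleCat.{u} R)) {X : ModuleCat.{u} R} (hX : X ∈ C) :
    X ∈ IEFac R C := ⟨X, hX, LinearMap.id, Function.surjective_id⟩

lemma ie_mem_IESub (C : Set (ModuleCat.{u} R)) {X : ModuleCat.{u} R} (hX : X ∈ C) :
    X ∈ IESub R C := ⟨X, hX, LinearMap.id, fun a b h => h⟩

lemma ie_subsingleton_mem {C : Set (ModuleCat.{u} R)} (hC : IsIEClosed R C)
    {C₀ : ModuleCat.{u} R} (hC₀ : C₀ ∈ C) (X : ModuleCat.{u} R) (hX : Subsingleton X) :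
    X ∈ C := by
  have h0 : ModuleCat.of R ↥(LinearMap.range (0 : C₀ →ₗ[R] C₀)) ∈ C :=
    hC.2.1 C₀ C₀ 0 hC₀ hC₀
  haveI h1 : Subsingleton ↑(ModuleCat.of R ↥(LinearMap.range (0 : C₀ →ₗ[R] C₀))) := by
    show Subsingleton ↥(LinearMap.range (0 : C₀ →ₗ[R] C₀))
    rw [LinearMap.range_zero]; infer_instance
  haveI := hX
  exact hC.1 (ModuleCat.of R ↥(LinearMap.range (0 : C₀ →ₗ[R] C₀))) X
    (LinearEquiv.ofSubsingleton _ _) h0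

lemma ie_claim1 {C : Set (ModuleCat.{u} R)} (hC : IsIEClosed R C) {B : ModuleCat.{u} R}
    (hB : FiltT R (IEFac R C) B) :
    ∀ (C' : ModuleCat.{u} R), C' ∈ C → ∀ ι : B →ₗ[R] C', Function.Injective ι → B ∈ C := by
  induction hB with
  | zero X h =>
    intro C' hC' ι hι
    exact ie_subsingleton_mem R hC hC' X h
  | cons A B Q f g hf hg hfg hA hQ ih =>
    intro C' hC' ι hι
    have hAC : A ∈ C := ih C' hC' (ι.comp f) (hι.comp hf)
    obtain ⟨C₂, hC₂, p, hp⟩ := hQ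
    set E : Submodule R (↑B × ↑C₂) :=
      LinearMap.ker ((g.comp (LinearMap.fst R ↑B ↑C₂)) - (p.comp (LinearMap.snd R ↑B ↑C₂)))
      with hE
    set EM := ModuleCat.of R ↥E with hEM
    have hmemE : ∀ a : A, ((f a, (0 : C₂)) : ↑B × ↑C₂) ∈ E := by
      intro a
      refine LinearMap.mem_ker.mpr ?_
      show g (f a) - p 0 = 0
      have hz : f a ∈ LinearMap.ker g := hfg ▸ LinearMap.mem_range_self f a
      rw [LinearMap.mem_ker.mp hz, map_zero, sub_zero]
    set fE : A →ₗ[R] EM := (f.prod 0).codRestrict E hmemE with hfE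
    have hfEi : Function.Injective fE := by
      intro a b h
      exact hf (congrArg (fun x : ↥E => x.val.1) h)
    set gE : EM →ₗ[R] C₂ := (LinearMap.snd R ↑B ↑C₂).comp E.subtype with hgE
    have hgEs : Function.Surjective gE := by
      intro c
      obtain ⟨b, hb⟩ := hg (p c)
      exact ⟨⟨(b, c), LinearMap.mem_ker.mpr (show g b - p c = 0 by rw [hb, sub_self])⟩, rfl⟩
    have hrk : LinearMap.range fE = LinearMap.ker gE := by
      ext x
      simp only [LinearMap.mem_range, LinearMap.mem_ker]
      constructor
      · rintro ⟨a, rfl⟩; rfl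
      · intro hx
        have hx2 : (x : ↥E).val.2 = 0 := hx
        have hker : g (x : ↥E).val.1 - p (x : ↥E).val.2 = 0 := (x : ↥E).2
        have hg1 : g (x : ↥E).val.1 = 0 := by
          rw [hx2, map_zero, sub_zero] at hker; exact hker
        have hmr : (x : ↥E).val.1 ∈ LinearMap.range f := hfg.symm ▸ hg1
        obtain ⟨a, ha⟩ := hmr
        refine ⟨a, ?_⟩
        apply E.injective_subtype
        exact Prod.ext ha hx2.symm
    have hEC : EM ∈ C := hC.2.2 A EM C₂ fE gE hfEi hgEs hrk hAC hC₂
    set φ : EM →ₗ[R] C' := ι.comp ((LinearMap.fst R ↑B ↑C₂).comp E.subtype) with hφ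
    have himg : ModuleCat.of R ↥(LinearMap.range φ) ∈ C := hC.2.1 EM C' φ hEC hC'
    have hrange : LinearMap.range φ = LinearMap.range ι := by
      ext y
      simp only [LinearMap.mem_range]
      constructor
      · rintro ⟨x, rfl⟩
        exact ⟨(x : ↥E).val.1, rfl⟩
      · rintro ⟨b, rfl⟩
        obtain ⟨c, hc⟩ := hp (g b)
        exact ⟨⟨(b, c), LinearMap.mem_ker.mpr (show g b - p c = 0 by rw [hc, sub_self])⟩, rfl⟩
    have e : (ModuleCat.of R ↥(LinearMap.range φ)) ≃ₗ[R] B :=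
      (LinearEquiv.ofEq _ _ hrange).trans (LinearEquiv.ofInjective ι hι).symm
    exact hC.1 _ B e himg

lemma ie_claim2 {C : Set (ModuleCat.{u} R)} (hC : IsIEClosed R C)
    {C₀ : ModuleCat.{u} R} (hC₀ : C₀ ∈ C) {B : ModuleCat.{u} R}
    (hB : FiltF R (IESub R C) B) :
    FiltT R (IEFac R C) B → B ∈ C := by
  induction hB with
  | zero X h =>
    intro _
    exact ie_subsingleton_mem R hC hC₀ X h
  | cons S B Q s q hs hq hsq hSmem hQ ih =>
    intro hT
    have hQT : FiltT R (IEFac R C) Q := ie_filtT_quot R (ie_IEFac_quot R C) hT Q q hq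
    have hQC : Q ∈ C := ih hQT
    obtain ⟨C₁, hC₁, j, hj⟩ := hSmem
    set ℓ : S →ₗ[R] ↑C₁ × ↑B := j.prod (-s) with hℓ
    set N := LinearMap.range ℓ with hN
    set EM := ModuleCat.of R ((↑C₁ × ↑B) ⧸ N) with hEM
    set ι₁ : C₁ →ₗ[R] EM := N.mkQ.comp (LinearMap.inl R ↑C₁ ↑B) with hι₁def
    set ιB : B →ₗ[R] EM := N.mkQ.comp (LinearMap.inr R ↑C₁ ↑B) with hιBdef
    have hι₁ : Function.Injective ι₁ := by
      intro a b h
      have hmem : (((a : ↑C₁), (0 : ↑B)) - ((b : ↑C₁), (0 : ↑B))) ∈ N := by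
        rw [← Submodule.Quotient.eq]
        exact h
      obtain ⟨y, hy⟩ := hmem
      rw [hℓ] at hy
      have h2 : -(s y) = (0 : ↑B) := by simpa using congrArg Prod.snd hy
      have hy0 : y = 0 := hs (by rw [show s y = 0 by rwa [neg_eq_zero] at h2, map_zero])
      have h1 : j y = a - b := by simpa using congrArg Prod.fst hy
      rw [hy0, map_zero] at h1
      exact (sub_eq_zero.mp h1.symm)
    have hιB : Function.Injective ιB := by
      intro a b h
      have hmem : (((0 : ↑C₁), (a : ↑B)) - ((0 : ↑C₁), (b : ↑B))) ∈ N := by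
        rw [← Submodule.Quotient.eq]
        exact h
      obtain ⟨y, hy⟩ := hmem
      rw [hℓ] at hy
      have h1 : j y = (0 : ↑C₁) := by simpa using congrArg Prod.fst hy
      have hy0 : y = 0 := hj (by rw [h1, map_zero])
      have h2 : -(s y) = a - b := by simpa using congrArg Prod.snd hy
      rw [hy0, map_zero, neg_zero] at h2
      exact (sub_eq_zero.mp h2.symm)
    have hNle : N ≤ LinearMap.ker (q.comp (LinearMap.snd R ↑C₁ ↑B)) := by
      rintro x ⟨y, rfl⟩
      refine LinearMap.mem_ker.mpr ?_
      show q (-(s y)) = 0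
      rw [map_neg]
      have hq0 : s y ∈ LinearMap.ker q := hsq ▸ LinearMap.mem_range_self s y
      rw [LinearMap.mem_ker.mp hq0, neg_zero]
    set φ : EM →ₗ[R] Q := N.liftQ (q.comp (LinearMap.snd R ↑C₁ ↑B)) hNle with hφdef
    have hφs : Function.Surjective φ := by
      intro x
      obtain ⟨b, rfl⟩ := hq x
      refine ⟨N.mkQ ((0 : ↑C₁), b), ?_⟩
      exact Submodule.liftQ_apply _ _ _
    have hrk : LinearMap.range ι₁ = LinearMap.ker φ := by
      ext z
      simp only [LinearMap.mem_range, LinearMap.mem_ker]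
      constructor
      · rintro ⟨c, rfl⟩
        show φ (N.mkQ ((c : ↑C₁), (0 : ↑B))) = 0
        have h' : φ (N.mkQ ((c : ↑C₁), (0 : ↑B))) = q 0 := Submodule.liftQ_apply _ _ _
        rw [h', map_zero]
      · intro hz
        obtain ⟨⟨c, b⟩, rfl⟩ := N.mkQ_surjective z
        have hqb : q b = 0 := by
          have heq : φ (N.mkQ ((c : ↑C₁), (b : ↑B))) = q b := Submodule.liftQ_apply _ _ _
          rw [← heq]
          exact hz
        have hbr : b ∈ LinearMap.range s := hsq.symm ▸ LinearMap.mem_ker.mpr hqb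
        obtain ⟨y, hy⟩ := hbr
        refine ⟨c + j y, ?_⟩
        show N.mkQ ((c + j y : ↑C₁), (0 : ↑B)) = N.mkQ ((c : ↑C₁), (b : ↑B))
        rw [Submodule.mkQ_apply, Submodule.mkQ_apply, Submodule.Quotient.eq]
        refine ⟨y, ?_⟩
        rw [hℓ]
        refine Prod.ext ?_ ?_
        · show j y = c + j y - c
          rw [add_sub_cancel_left]
        · show -(s y) = 0 - b
          rw [hy, zero_sub]
    have hEC : EM ∈ C := hC.2.2 C₁ EM Q ι₁ φ hι₁ hφs hrk hC₁ hQC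
    exact ie_claim1 R hC hT EM hEC ιB hιB

/-- `C` is IE-closed iff it is the intersection of a torsion class
and a torsion-free class. -/
theorem stmt3 (k : Type u) [Field k] [Algebra k R] [FiniteDimensional k R]
    (C : Set (ModuleCat.{u} R)) :
    IsIEClosed R C ↔
      ∃ T F : Set (ModuleCat.{u} R),
        IsTorsionClass R T ∧ IsTorsionFreeClass R F ∧ C = T ∩ F := by
  constructor
  · intro hC
    by_cases hne : ∃ C₀, C₀ ∈ C
    · obtain ⟨C₀, hC₀⟩ := hne
      refine ⟨{X | FiltT R (IEFac R C) X}, {X | FiltF R (IESub R C) X},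
        ⟨?_, ?_⟩, ⟨?_, ?_⟩, ?_⟩
      · intro X Y f hf hX
        exact ie_filtT_quot R (ie_IEFac_quot R C) hX Y f hf
      · intro A B X f g hf hg hfg hA hX
        exact ie_filtT_ext R hX A B f g hf hg hfg hA
      · intro X Y f hf hY
        exact ie_filtF_sub R (ie_IESub_sub R C) hY X f hf
      · intro A B X f g hf hg hfg hA hX
        exact ie_filtF_ext R hA B X f g hf hg hfg hX
      · apply Set.Subset.antisymm
        · intro X hX
          exact ⟨ie_mem_filtT_of_mem R (ie_mem_IEFac R C hX),
            ie_mem_filtF_of_mem R (ie_mem_IESub R C hX)⟩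
        · rintro X ⟨hT, hF⟩
          exact ie_claim2 R hC hC₀ hF hT
    · push_neg at hne
      refine ⟨∅, ∅, ⟨?_, ?_⟩, ⟨?_, ?_⟩, ?_⟩
      · intro X Y f _ hX; exact absurd hX (Set.notMem_empty X)
      · intro A B X f g _ _ _ hA _; exact absurd hA (Set.notMem_empty A)
      · intro X Y f _ hY; exact absurd hY (Set.notMem_empty Y)
      · intro A B X f g _ _ _ hA _; exact absurd hA (Set.notMem_empty A)
      · have hCe : C = ∅ := Set.eq_empty_iff_forall_notMem.mpr hne
        rw [hCe, Set.empty_inter]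
  · rintro ⟨T, F, ⟨hTq, hTe⟩, ⟨hFs, hFe⟩, rfl⟩
    refine ⟨?_, ?_, ?_⟩
    · intro X Y e hX
      exact ⟨hTq X Y e.toLinearMap e.surjective hX.1,
        hFs Y X e.symm.toLinearMap e.symm.injective hX.2⟩
    · intro X Y f hX hY
      exact ⟨hTq X (ModuleCat.of R (LinearMap.range f)) f.rangeRestrict
        (LinearMap.surjective_rangeRestrict f) hX.1,
        hFs (ModuleCat.of R (LinearMap.range f)) Y (LinearMap.range f).subtype
        (Submodule.injective_subtype _) hY.2⟩
    · intro A B X f g hf hg hfg hA hX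
      exact ⟨hTe A B X f g hf hg hfg hA.1 hX.1, hFe A B X f g hf hg hfg hA.2 hX.2⟩
end

section
/- Let Λ be a finite-dimensional algebra, M a module with Fac M a torsion class, and N a module with Sub N a torsion-free class. Set C = Fac M ∩ Sub N, and let 0 → U_M → M → P_M → 0 be the canonical short exact sequence for the torsion pair (⊥N, Sub N), so that P_M ∈ Sub N and U_M ∈ ⊥N. Then the smallest torsion class containing C equals the smallest torsion class containing P_M, i.e. T(C) = T(P_M). -/
/- Common definitions: subcategories of the module category of a
finite-dimensional algebra, torsion theory, approximations,
(support τ-tilting)-style notions, etc. -/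

universe u

variable (R : Type u) [Ring R]

/-! `P_M` lies in `C`, being a quotient of `M` that lies in `Sub N`. Conversely, let `X ∈ C` be a
quotient of `Mⁿ`. Since `U_M ∈ ⊥N` and `X ∈ Sub N`, the epimorphism `Mⁿ → X` kills `U_Mⁿ`, the
kernel of `Mⁿ → P_Mⁿ`, so it factors through `P_Mⁿ`. Hence `C ⊆ Fac P_M ⊆ T(P_M)`. -/

namespace LinearMap

variable {R} {M P X : Type*} [AddCommGroup M] [Module R M] [AddCommGroup P] [Module R P]
  [AddCommGroup X] [Module R X]

theorem exists_comp_eq_of_ker_le {p : M →ₗ[R] P} (hp : Function.Surjective p) {f : M →ₗ[R] X}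
    (h : ker p ≤ ker f) : ∃ g : P →ₗ[R] X, g ∘ₗ p = f :=
  ⟨(ker p).liftQ f h ∘ₗ (p.quotKerEquivOfSurjective hp).symm.toLinearMap, by
    ext m
    simp⟩

theorem ker_piMap_le_ker {ι : Type*} [Finite ι] [DecidableEq ι] {p : M →ₗ[R] P}
    {f : (ι → M) →ₗ[R] X} (h : ∀ j, ker p ≤ ker (f ∘ₗ single R (fun _ => M) j)) :
    ker (piMap fun _ : ι => p) ≤ ker f := by
  have hker : ker (piMap fun _ : ι => p) = Submodule.pi Set.univ fun _ => ker p := by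
    ext v
    simp [funext_iff]
  rw [hker, ← Submodule.iSup_map_single, iSup_le_iff]
  exact fun j => Submodule.map_le_iff_le_comap.mpr ((h j).trans_eq (ker_comp _ _))

end LinearMap

section TorsionClass

variable {R}

theorem isTorsionClass_tcl (S : Set (ModuleCat.{u} R)) : IsTorsionClass R (Tcl R S) :=
  ⟨fun X Y f hf hX T hT => hT.1.1 X Y f hf (hX T hT),
    fun A B X f g hf hg hex hA hX T hT => hT.1.2 A B X f g hf hg hex (hA T hT) (hX T hT)⟩

theorem subset_tcl_s4 (S : Set (ModuleCat.{u} R)) : S ⊆ Tcl R S :=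
  fun _ hX _ hT => hT.2 hX

theorem tcl_subset {S T : Set (ModuleCat.{u} R)} (hT : IsTorsionClass R T) (h : S ⊆ T) :
    Tcl R S ⊆ T :=
  fun _ hX => hX T ⟨hT, h⟩

namespace IsTorsionClass

variable {T : Set (ModuleCat.{u} R)} (hT : IsTorsionClass R T)
include hT

theorem mem_of_linearEquiv {X Y : ModuleCat.{u} R} (e : X ≃ₗ[R] Y) (hX : X ∈ T) : Y ∈ T :=
  hT.1 X Y e e.surjective hX

theorem prod_mem {A B : ModuleCat.{u} R} (hA : A ∈ T) (hB : B ∈ T) :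
    ModuleCat.of R (A × B) ∈ T :=
  hT.2 A (ModuleCat.of R (A × B)) B (LinearMap.inl R A B) (LinearMap.snd R A B)
    LinearMap.inl_injective LinearMap.snd_surjective (LinearMap.ker_snd R A B).symm hA hB

theorem pi_fin_mem {P : ModuleCat.{u} R} (hP : P ∈ T) (n : ℕ) :
    ModuleCat.of R (Fin n → P) ∈ T := by
  induction n with
  | zero => exact hT.1 P _ 0 (fun _ => ⟨0, Subsingleton.elim _ _⟩) hP
  | succ n ih =>
    exact hT.mem_of_linearEquiv (X := ModuleCat.of R (P × (Fin n → P)))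
      (Fin.consLinearEquiv R fun _ => P) (hT.prod_mem hP ih)

theorem facSet_subset {P : ModuleCat.{u} R} (hP : P ∈ T) : FacSet R P ⊆ T :=
  fun X ⟨n, f, hf⟩ => hT.1 _ X f hf (hT.pi_fin_mem hP n)

end IsTorsionClass

theorem mem_facSet_of_surjective {M X : ModuleCat.{u} R} (p : M →ₗ[R] X)
    (hp : Function.Surjective p) : X ∈ FacSet R M :=
  ⟨1, p ∘ₗ LinearMap.proj 0, fun x => (hp x).elim fun m hm => ⟨fun _ => m, hm⟩⟩

theorem facSet_inter_subset_facSet {M P U : ModuleCat.{u} R} {S : Set (ModuleCat.{u} R)}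
    (i : U →ₗ[R] M) (p : M →ₗ[R] P) (hp : Function.Surjective p)
    (hex : LinearMap.range i = LinearMap.ker p) (hU : U ∈ PerpL R S) :
    FacSet R M ∩ S ⊆ FacSet R P := by
  rintro X ⟨⟨n, f, hf⟩, hXS⟩
  have hker : LinearMap.ker (LinearMap.piMap fun _ : Fin n => p) ≤ LinearMap.ker f :=
    LinearMap.ker_piMap_le_ker fun j => hex ▸ LinearMap.range_le_ker_iff.mpr
      (by simpa only [LinearMap.comp_assoc] using hU X hXS (f ∘ₗ LinearMap.single R _ j ∘ₗ i))
  obtain ⟨g, hg⟩ := LinearMap.exists_comp_eq_of_ker_le (Function.Surjective.piMap fun _ => hp) hker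
  exact ⟨n, g, Function.Surjective.of_comp (hg ▸ hf)⟩

end TorsionClass

theorem stmt4
    (M N UM PM : ModuleCat.{u} R)
    (i : UM →ₗ[R] M) (p : M →ₗ[R] PM)
    (hp : Function.Surjective p)
    (hex : LinearMap.range i = LinearMap.ker p)
    (hPM : PM ∈ SubSet R N) (hUM : UM ∈ PerpL R (SubSet R N)) :
    Tcl R (FacSet R M ∩ SubSet R N) = Tcl R {PM} := by
  have hPM_mem : PM ∈ FacSet R M ∩ SubSet R N := ⟨mem_facSet_of_surjective p hp, hPM⟩
  have hC : FacSet R M ∩ SubSet R N ⊆ Tcl R {PM} :=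
    (facSet_inter_subset_facSet i p hp hex hUM).trans
      ((isTorsionClass_tcl _).facSet_subset (subset_tcl_s4 _ rfl))
  exact (tcl_subset (isTorsionClass_tcl _) hC).antisymm
    (tcl_subset (isTorsionClass_tcl _) (Set.singleton_subset_iff.mpr (subset_tcl_s4 _ hPM_mem)))
end

section
/- Let Λ be a finite-dimensional algebra, M, N modules such that (Fac M, M^⊥) is a torsion pair, and set C = Fac M ∩ Sub N. Let 0 → I^N → N → V^N → 0 be the canonical sequence with I^N ∈ Fac M the maximal torsion submodule of N and V^N ∈ M^⊥. Then the smallest torsion-free class containing C equals the smallest torsion-free class containing I^N, i.e. F(C) = F(I^N). -/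
/- Common definitions: subcategories of the module category of a
finite-dimensional algebra, torsion theory, approximations,
(support τ-tilting)-style notions, etc. -/

universe u

variable (R : Type u) [Ring R]

/-! Every `X ∈ Fac M ∩ Sub N` embeds into some `Nⁿ`. Since `Hom(Fac M, M^⊥) = 0`,
composing this embedding with `pⁿ : Nⁿ → (V^N)ⁿ` gives zero, so it factors through `(I^N)ⁿ`
and `X ∈ Sub I^N`, which lies in any torsion-free class containing `I^N`. Conversely `I^N`
itself lies in `Fac M ∩ Sub N`. -/

section

variable {R}

lemma isTorsionFreeClass_Fcl (S : Set (ModuleCat.{u} R)) : IsTorsionFreeClass R (Fcl R S) :=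
  ⟨fun X Y f hf hY F hF => hF.1.1 X Y f hf (hY F hF),
    fun A B X f g hf hg hfg hA hX F hF => hF.1.2 A B X f g hf hg hfg (hA F hF) (hX F hF)⟩

lemma subset_Fcl (S : Set (ModuleCat.{u} R)) : S ⊆ Fcl R S :=
  fun _ hX _ hF => hF.2 hX

lemma Fcl_subset {S F : Set (ModuleCat.{u} R)} (hF : IsTorsionFreeClass R F) (hSF : S ⊆ F) :
    Fcl R S ⊆ F :=
  fun _ hX => hX F ⟨hF, hSF⟩

lemma IsTorsionFreeClass.prod_mem {F : Set (ModuleCat.{u} R)} (hF : IsTorsionFreeClass R F)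
    {A B : ModuleCat.{u} R} (hA : A ∈ F) (hB : B ∈ F) : ModuleCat.of R (A × B) ∈ F :=
  hF.2 A (ModuleCat.of R (A × B)) B (LinearMap.inl R A B) (LinearMap.snd R A B)
    LinearMap.inl_injective LinearMap.snd_surjective (LinearMap.range_inl R A B) hA hB

lemma IsTorsionFreeClass.pi_mem {F : Set (ModuleCat.{u} R)} (hF : IsTorsionFreeClass R F)
    {A : ModuleCat.{u} R} (hA : A ∈ F) (n : ℕ) : ModuleCat.of R (Fin n → A) ∈ F := by
  induction n with
  | zero => exact hF.1 _ A 0 (Function.injective_of_subsingleton _) hA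
  | succ n ih =>
    let e := Fin.consLinearEquiv R (fun _ : Fin (n + 1) => (A : Type u))
    exact hF.1 (ModuleCat.of R (Fin (n + 1) → A)) (ModuleCat.of R (A × (Fin n → A)))
      e.symm.toLinearMap e.symm.injective (hF.prod_mem hA ih)

lemma IsTorsionFreeClass.subSet_subset {F : Set (ModuleCat.{u} R)} (hF : IsTorsionFreeClass R F)
    {A : ModuleCat.{u} R} (hA : A ∈ F) : SubSet R A ⊆ F := by
  rintro X ⟨n, f, hf⟩
  exact hF.1 X (ModuleCat.of R (Fin n → A)) f hf (hF.pi_mem hA n)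

lemma mem_SubSet_of_injective {X N : ModuleCat.{u} R} (f : X →ₗ[R] N)
    (hf : Function.Injective f) : X ∈ SubSet R N :=
  ⟨1, LinearMap.pi fun _ => f, fun _ _ h => hf (congrFun h 0)⟩

lemma hom_eq_zero_of_mem_FacSet_of_mem_PerpOfMod {M X Y : ModuleCat.{u} R} (hX : X ∈ FacSet R M)
    (hY : Y ∈ PerpOfMod R M) (g : X →ₗ[R] Y) : g = 0 := by
  obtain ⟨n, f, hf⟩ := hX
  have hgf : g ∘ₗ f = 0 := LinearMap.pi_ext fun j x =>
    LinearMap.congr_fun (hY (g ∘ₗ f ∘ₗ LinearMap.single R (fun _ => (M : Type u)) j)) x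
  exact (LinearMap.cancel_right hf).1 (by rw [hgf, LinearMap.zero_comp])

lemma LinearMap.exists_comp_eq_of_range_le {A B C : Type*} [AddCommGroup A] [AddCommGroup B]
    [AddCommGroup C] [Module R A] [Module R B] [Module R C] (i : A →ₗ[R] B)
    (hi : Function.Injective i) (f : C →ₗ[R] B) (h : LinearMap.range f ≤ LinearMap.range i) :
    ∃ g : C →ₗ[R] A, i ∘ₗ g = f :=
  ⟨(LinearEquiv.ofInjective i hi).symm.toLinearMap ∘ₗ f.codRestrict _ fun c => h ⟨c, rfl⟩,
    LinearMap.ext fun c => LinearEquiv.ofInjective_symm_apply i (h := hi) (f.codRestrict _ _ c)⟩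

lemma mem_SubSet_of_hom_eq_zero {I N V X : ModuleCat.{u} R} (i : I →ₗ[R] N) (p : N →ₗ[R] V)
    (hi : Function.Injective i) (hip : LinearMap.range i = LinearMap.ker p)
    (hX : X ∈ SubSet R N) (hXV : ∀ g : X →ₗ[R] V, g = 0) : X ∈ SubSet R I := by
  obtain ⟨n, f, hf⟩ := hX
  have hrange (j : Fin n) : LinearMap.range (LinearMap.proj j ∘ₗ f) ≤ LinearMap.range i := by
    rintro _ ⟨x, rfl⟩
    rw [hip, LinearMap.mem_ker]
    exact LinearMap.congr_fun (hXV (p ∘ₗ LinearMap.proj j ∘ₗ f)) x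
  choose g hg using fun j => LinearMap.exists_comp_eq_of_range_le i hi _ (hrange j)
  refine ⟨n, LinearMap.pi g, Function.Injective.of_comp (f := LinearMap.piMap fun _ => i) ?_⟩
  convert hf
  ext x j
  exact LinearMap.congr_fun (hg j) x

end

theorem stmt5
    (M N IN VN : ModuleCat.{u} R)
    (i : IN →ₗ[R] N) (p : N →ₗ[R] VN)
    (hi : Function.Injective i)
    (hex : LinearMap.range i = LinearMap.ker p)
    (hIN : IN ∈ FacSet R M) (hVN : VN ∈ PerpOfMod R M) :
    Fcl R (FacSet R M ∩ SubSet R N) = Fcl R {IN} := by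
  have hF := isTorsionFreeClass_Fcl {IN}
  refine subset_antisymm (Fcl_subset hF fun X ⟨hXM, hXN⟩ => ?_) ?_
  · have hXI : X ∈ SubSet R IN := mem_SubSet_of_hom_eq_zero i p hi hex hXN
      (hom_eq_zero_of_mem_FacSet_of_mem_PerpOfMod hXM hVN)
    exact hF.subSet_subset (subset_Fcl _ rfl) hXI
  · exact Fcl_subset (isTorsionFreeClass_Fcl _)
      (Set.singleton_subset_iff.2 (subset_Fcl _ ⟨hIN, mem_SubSet_of_injective i hi⟩))
end

section
/- Let Λ be a finite-dimensional algebra, M, N modules with Fac M a torsion class and Sub N a torsion-free class, and let P_M ∈ Sub N be the maximal quotient of M lying in Sub N (i.e. M/t(M) for the torsion pair (⊥N, Sub N)). Then every module X ∈ Fac M ∩ Sub N is a quotient of a finite direct sum of copies of P_M; in particular Fac M ∩ Sub N ⊆ Fac(P_M). -/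
/- Common definitions: subcategories of the module category of a
finite-dimensional algebra, torsion theory, approximations,
(support τ-tilting)-style notions, etc. -/

universe u

variable (R : Type u) [Ring R]

/-- every `X ∈ Fac M ∩ Sub N` is a quotient of a finite direct sum
of copies of `P_M`; i.e. `Fac M ∩ Sub N ⊆ Fac P_M`. -/
theorem stmt6 (k : Type u) [Field k] [Algebra k R] [FiniteDimensional k R]
    (M N UM PM : ModuleCat.{u} R)
    (hM : IsTorsionClass R (FacSet R M)) (hN : IsTorsionFreeClass R (SubSet R N))
    (i : UM →ₗ[R] M) (p : M →ₗ[R] PM)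
    (hi : Function.Injective i) (hp : Function.Surjective p)
    (hex : LinearMap.range i = LinearMap.ker p)
    (hPM : PM ∈ SubSet R N) (hUM : UM ∈ PerpL R (SubSet R N)) :
    FacSet R M ∩ SubSet R N ⊆ FacSet R PM := by
  rintro X ⟨⟨n, f, hf⟩, hXsub⟩
  -- component maps M → X
  set fj : Fin n → (M →ₗ[R] X) :=
    fun j => f.comp (LinearMap.single R (fun _ : Fin n => M) j) with hfj
  have hker : ∀ j, LinearMap.ker p ≤ LinearMap.ker (fj j) := by
    intro j
    rw [← hex]
    rintro _ ⟨u, rfl⟩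
    have h0 : (fj j).comp i = 0 := hUM X hXsub _
    have := LinearMap.congr_fun h0 u
    simpa using this
  let e := p.quotKerEquivOfSurjective hp
  let gj : Fin n → (PM →ₗ[R] X) :=
    fun j => ((LinearMap.ker p).liftQ (fj j) (hker j)).comp e.symm.toLinearMap
  have hgj : ∀ j (m : M), gj j (p m) = fj j m := by
    intro j m
    have he : e.symm (p m) = Submodule.Quotient.mk m := by
      apply e.injective
      simp [e, LinearMap.quotKerEquivOfSurjective]
    simp [gj, he]
  refine ⟨n, ∑ j, (gj j).comp (LinearMap.proj j), ?_⟩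
  intro x
  obtain ⟨v, rfl⟩ := hf x
  refine ⟨fun j => p (v j), ?_⟩
  have hv : (∑ j, Pi.single j (v j)) = v := Finset.univ_sum_single v
  calc (∑ j, (gj j).comp (LinearMap.proj j)) (fun j => p (v j))
      = ∑ j, gj j (p (v j)) := by
        simp [LinearMap.sum_apply]
    _ = ∑ j, fj j (v j) := by simp [hgj]
    _ = f (∑ j, Pi.single j (v j)) := by
        rw [map_sum]
        simp [fj, LinearMap.single_apply]
    _ = f v := by rw [hv]
end

section
/- Let Λ be a finite-dimensional algebra and (M, N) a twin support τ-tilting pair (M basic support τ-tilting, N basic support τ⁻-tilting). Let C = Fac M ∩ Sub N and let 0 → U_M → M → P_M → 0 be the canonical sequence for the torsion pair (⊥N, Sub N). Then P_M is Ext-projective in C, i.e. Ext¹(P_M, X) = 0 for all X ∈ C. -/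
/- Common definitions: subcategories of the module category of a
finite-dimensional algebra, torsion theory, approximations,
(support τ-tilting)-style notions, etc. -/

universe u

variable (R : Type u) [Ring R]

/-- for a twin support τ-tilting pair `(M, N)` and the canonical
sequence `0 → U_M → M → P_M → 0` for `(⊥N, Sub N)`, the module `P_M` is
Ext-projective in `C = Fac M ∩ Sub N`. -/
theorem stmt7 (k : Type u) [Field k] [Algebra k R] [FiniteDimensional k R]
    (M N UM PM : ModuleCat.{u} R)
    (hM : IsSupportTauTilting R M) (hMb : Basic R M)
    (hN : IsSupportTauMinusTilting R N) (hNb : Basic R N)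
    (i : UM →ₗ[R] M) (p : M →ₗ[R] PM)
    (hi : Function.Injective i) (hp : Function.Surjective p)
    (hex : LinearMap.range i = LinearMap.ker p)
    (hPM : PM ∈ SubSet R N) (hUM : UM ∈ PerpL R (SubSet R N)) :
    ExtProjIn R (FacSet R M ∩ SubSet R N) PM := by
  intro E g hg hK
  obtain ⟨hKfac, hKsub⟩ := hK
  -- pullback of g along p
  set φ : E × M →ₗ[R] PM :=
    g.comp (LinearMap.fst R E M) - p.comp (LinearMap.snd R E M) with hφ
  set S : Submodule R (E × M) := LinearMap.ker φ with hS
  have memS : ∀ x : E × M, x ∈ S ↔ g x.1 = p x.2 := by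
    intro x
    simp [hS, hφ, LinearMap.mem_ker, sub_eq_zero]
  let π2 : S →ₗ[R] M := (LinearMap.snd R E M).comp S.subtype
  let π1 : S →ₗ[R] E := (LinearMap.fst R E M).comp S.subtype
  have hπ2surj : Function.Surjective π2 := by
    intro m
    obtain ⟨e, he⟩ := hg (p m)
    exact ⟨⟨(e, m), (memS (e, m)).2 he⟩, rfl⟩
  -- kernel g embeds into S as kernel of π2
  let jmap : LinearMap.ker g →ₗ[R] S :=
    LinearMap.codRestrict S ((LinearMap.inl R E M).comp (LinearMap.ker g).subtype)
      (by
        intro x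
        refine (memS _).2 ?_
        simpa using x.2)
  have hjinj : Function.Injective jmap := by
    intro a b h
    have h1 : ((LinearMap.inl R E M).comp (LinearMap.ker g).subtype) a
        = ((LinearMap.inl R E M).comp (LinearMap.ker g).subtype) b := by
      exact congrArg Subtype.val h
    have h2 : (a : E) = (b : E) := congrArg Prod.fst h1
    exact Subtype.ext h2
  have hjrange : LinearMap.range jmap = LinearMap.ker π2 := by
    ext s
    constructor
    · rintro ⟨x, rfl⟩
      rfl
    · intro hs
      have hm : (s : E × M).2 = 0 := hs
      have hge : g (s : E × M).1 = 0 := by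
        have := (memS (s : E × M)).1 s.2
        rw [hm] at this
        simpa using this
      refine ⟨⟨(s : E × M).1, hge⟩, ?_⟩
      apply Subtype.ext
      show ((s : E × M).1, (0 : M)) = (s : E × M)
      rw [← hm]
  have hMfac : M ∈ FacSet R M := by
    refine ⟨1, LinearMap.proj 0, fun m => ⟨fun _ => m, rfl⟩⟩
  -- S ∈ Fac M by extension-closedness
  have hSfac : ModuleCat.of R S ∈ FacSet R M :=
    hM.1.2 (ModuleCat.of R (LinearMap.ker g)) (ModuleCat.of R S) M jmap π2
      hjinj hπ2surj hjrange hKfac hMfac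
  -- kernel of π2 is in Fac M (it's isomorphic to ker g)
  have hkerπ2 : ModuleCat.of R (LinearMap.ker π2) ∈ FacSet R M := by
    obtain ⟨n, f, hf⟩ := hKfac
    let ψ : LinearMap.ker g →ₗ[R] LinearMap.ker π2 :=
      LinearMap.codRestrict _ jmap (fun x => hjrange ▸ ⟨x, rfl⟩)
    have hψ : Function.Surjective ψ := by
      intro y
      have : (y : S) ∈ LinearMap.range jmap := hjrange.symm ▸ y.2
      obtain ⟨x, hx⟩ := this
      exact ⟨x, Subtype.ext hx⟩
    exact ⟨n, ψ.comp f, hψ.comp hf⟩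
  -- M is Ext-projective in Fac M: split the pullback sequence
  obtain ⟨s, hs⟩ := hM.2.2.1 (ModuleCat.of R S) π2 hπ2surj hkerπ2
  let s' : M →ₗ[R] S := s
  let q : M →ₗ[R] E := π1.comp s'
  have hπ2s : ∀ m : M, ((s' m : E × M)).2 = m := fun m => LinearMap.congr_fun hs m
  have hgq : ∀ m : M, g (q m) = p m := by
    intro m
    have h1 := (memS ((s' m : E × M))).1 (s' m).2
    have h2 : ((s' m : E × M)).2 = m := hπ2s m
    rw [h2] at h1
    exact h1
  -- q kills range i = ker p
  have hqi : ∀ u : UM, q (i u) = 0 := by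
    intro u
    have hmem : ∀ u : UM, g (q (i u)) = 0 := by
      intro u
      rw [hgq]
      have : i u ∈ LinearMap.ker p := hex ▸ ⟨u, rfl⟩
      exact this
    let h : UM →ₗ[R] ModuleCat.of R (LinearMap.ker g) :=
      LinearMap.codRestrict _ (q.comp i) hmem
    have hz : h = 0 := hUM (ModuleCat.of R (LinearMap.ker g)) hKsub h
    have hzu : h u = 0 := by rw [hz]; rfl
    exact congrArg (fun x : LinearMap.ker g => (x : E)) hzu
  have hle : LinearMap.ker p ≤ LinearMap.ker q := by
    intro x hx
    obtain ⟨u, rfl⟩ := hex.symm ▸ hx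
    exact hqi u
  -- factor q through p
  let lift : (M ⧸ LinearMap.ker p) →ₗ[R] E := (LinearMap.ker p).liftQ q hle
  let eqv : (M ⧸ LinearMap.ker p) ≃ₗ[R] PM := p.quotKerEquivOfSurjective hp
  let cs : PM →ₗ[R] (M ⧸ LinearMap.ker p) := eqv.symm
  refine ⟨lift.comp cs, ?_⟩
  apply LinearMap.ext
  intro x
  obtain ⟨m, rfl⟩ := hp x
  have hsymm : cs (p m) = Submodule.Quotient.mk m := by
    show eqv.symm (p m) = Submodule.Quotient.mk m
    rw [LinearEquiv.symm_apply_eq]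
    rfl
  show g (lift (cs (p m))) = p m
  rw [hsymm]
  exact hgq m
end
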